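/- Explicit homogenization of a layered quadratic medium, transverse directions (Remark 3.5 of the paper): for every weight ω : ℤ → (0,∞), every integer k ≥ 1, every ℓ ∈ ℝ and every j ∈ {2,…,d}, the infimum over all k-periodic functions φ : ℤ^d → ℝ of (1/k^d) Σ_{z∈ℤ^d∩[0,k)^d} Σ_{i=1}^d ω(z·e₁) |ℓ·δ_{ij} + φ(z+e_i) − φ(z)|² equals ℓ² · (1/k) Σ_{x=0}^{k−1} ω(x), i.e. the arithmetic mean of the weights ω(0),…,ω(k−1) times ℓ² (and the infimum is attained at φ = 0). -/

import Mathlib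

open MeasureTheory Filter Set
open scoped Topology

noncomputable section

namespace Layered

/-- The standard basis vectors `eᵢ` of `ℤ^d`. -/
def stdb {d : ℕ} (i : Fin d) : Fin d → ℤ := fun j => if j = i then 1 else 0

/-- A function `φ : ℤ^d → ℝ` is `k`-periodic if `φ(z + k z') = φ(z)` for all `z, z' ∈ ℤ^d`. -/
def kPeriodic {d : ℕ} (k : ℕ) (φ : (Fin d → ℤ) → ℝ) : Prop :=
  ∀ z z' : Fin d → ℤ, φ (z + k • z') = φ z

/-- The lattice point of `ℤ^d ∩ [0,k)^d` corresponding to `w : Fin d → Fin k`. -/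
def pt {d k : ℕ} (w : Fin d → Fin k) : Fin d → ℤ := fun j => ((w j : ℕ) : ℤ)

/-!
Testing `φ = 0` gives the value `ℓ²` times the mean of the weights. For the lower bound keep
only the direction `j` and expand `(ℓ + Dⱼφ)² ≥ ℓ² + 2ℓ Dⱼφ`, where `Dⱼφ(z) = φ(z + eⱼ) - φ(z)`.
The cross term vanishes: the weight `ω(z·e₁)` does not depend on the `j`-th coordinate, and
cyclically shifting the cell in direction `j` shows that the `j`-increments of a `k`-periodic `φ`
sum to zero over the cell.
-/

def cellEnergy {d : ℕ} [NeZero d] (k : ℕ) (ω : ℤ → ℝ) (ℓ : ℝ) (j : Fin d)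
    (φ : (Fin d → ℤ) → ℝ) : ℝ :=
  ((k : ℝ) ^ d)⁻¹ * ∑ w : Fin d → Fin k, ∑ i : Fin d,
    ω (pt w 0) * |(if i = j then ℓ else 0) + φ (pt w + stdb i) - φ (pt w)| ^ 2

theorem kPeriodic.apply_eq_of_modEq {d k : ℕ} {φ : (Fin d → ℤ) → ℝ} (hφ : kPeriodic k φ)
    {a b : Fin d → ℤ} (hab : ∀ i, a i ≡ b i [ZMOD k]) : φ a = φ b := by
  have hb : b = a + (k : ℤ) • fun i => (b i - a i) / k := by
    funext i
    simp [Int.mul_ediv_cancel' (hab i).dvd]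
  rw [hb, natCast_zsmul]
  exact (hφ a _).symm

def cellShift {d k : ℕ} (i : Fin d) : Equiv.Perm (Fin d → Fin k) :=
  Equiv.piCongrRight (Pi.mulSingle i (finRotate k))

theorem cellShift_apply_of_ne {d k : ℕ} {i i' : Fin d} (h : i' ≠ i) (w : Fin d → Fin k) :
    cellShift i w i' = w i' := by
  simp [cellShift, Pi.mulSingle_eq_of_ne h]

theorem pt_cellShift_modEq {d k : ℕ} (i : Fin d) (w : Fin d → Fin k) (i' : Fin d) :
    (pt w + stdb i) i' ≡ pt (cellShift i w) i' [ZMOD k] := by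
  by_cases h : i' = i
  · subst h
    have := (w i').neZero
    simp only [pt, stdb, cellShift, Pi.add_apply, if_pos, Equiv.piCongrRight_apply, Pi.map_apply,
      Pi.mulSingle_eq_same, finRotate_apply]
    rw [Fin.val_add, Fin.val_one', ← Nat.cast_one, ← Nat.cast_add, Int.natCast_modEq_iff]
    exact ((Nat.mod_modEq _ _).add_left _).symm.trans (Nat.mod_modEq _ _).symm
  · simp [pt, stdb, h, cellShift_apply_of_ne h]

theorem sum_mul_sub_apply_add_stdb_eq_zero {d k : ℕ} {φ : (Fin d → ℤ) → ℝ}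
    (hφ : kPeriodic k φ) (i : Fin d) (c : (Fin d → Fin k) → ℝ)
    (hc : ∀ w, c (cellShift i w) = c w) :
    ∑ w : Fin d → Fin k, c w * (φ (pt w + stdb i) - φ (pt w)) = 0 := by
  have hshift : ∑ w : Fin d → Fin k, c w * φ (pt w + stdb i) =
      ∑ w : Fin d → Fin k, c w * φ (pt w) := by
    calc ∑ w : Fin d → Fin k, c w * φ (pt w + stdb i)
        = ∑ w : Fin d → Fin k, c (cellShift i w) * φ (pt (cellShift i w)) :=
          Finset.sum_congr rfl fun w _ =>
            by rw [hc, hφ.apply_eq_of_modEq (pt_cellShift_modEq i w)]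
      _ = ∑ w : Fin d → Fin k, c w * φ (pt w) :=
          Equiv.sum_comp (cellShift i) fun w => c w * φ (pt w)
  simp only [mul_sub, Finset.sum_sub_distrib, hshift, sub_self]

theorem inv_pow_mul_sum_apply_eval {d k : ℕ} [NeZero d] (i : Fin d) (f : Fin k → ℝ) :
    ((k : ℝ) ^ d)⁻¹ * ∑ w : Fin d → Fin k, f (w i) = (k : ℝ)⁻¹ * ∑ x, f x := by
  have hsum := Fintype.sum_piFinset_apply f Finset.univ i
  rw [Fintype.piFinset_univ] at hsum
  rw [hsum, Finset.card_univ, Fintype.card_fin, Fintype.card_fin, nsmul_eq_mul, Nat.cast_pow]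
  rcases eq_or_ne (k : ℝ) 0 with hk | hk
  · simp [hk, NeZero.ne d]
  · rw [← pow_sub_one_mul (NeZero.ne d)]
    field_simp

theorem cellEnergy_zero_eq {d k : ℕ} [NeZero d] (ω : ℤ → ℝ) (ℓ : ℝ) (j : Fin d) :
    cellEnergy k ω ℓ j 0 = ((k : ℝ) ^ d)⁻¹ * ∑ w : Fin d → Fin k, ω (pt w 0) * ℓ ^ 2 := by
  simp [cellEnergy, sq_abs]

theorem cellEnergy_zero {d k : ℕ} [NeZero d] (ω : ℤ → ℝ) (ℓ : ℝ) (j : Fin d) :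
    cellEnergy k ω ℓ j 0 = ℓ ^ 2 * ((k : ℝ)⁻¹ * ∑ x ∈ Finset.range k, ω (x : ℤ)) := by
  simp only [cellEnergy_zero_eq, pt]
  rw [← Finset.sum_mul, ← mul_assoc,
    inv_pow_mul_sum_apply_eval 0 (fun x : Fin k => ω ((x : ℕ) : ℤ)),
    Fin.sum_univ_eq_sum_range (fun x => ω (x : ℤ)), mul_comm]

theorem cellEnergy_zero_le {d k : ℕ} [NeZero d] {ω : ℤ → ℝ} (hω : ∀ x, 0 ≤ ω x) (ℓ : ℝ)
    {j : Fin d} (hj : j ≠ 0) {φ : (Fin d → ℤ) → ℝ} (hφ : kPeriodic k φ) :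
    cellEnergy k ω ℓ j 0 ≤ cellEnergy k ω ℓ j φ := by
  set D : (Fin d → Fin k) → ℝ := fun w => φ (pt w + stdb j) - φ (pt w)
  have hcross : ∑ w, ω (pt w 0) * D w = 0 :=
    sum_mul_sub_apply_add_stdb_eq_zero hφ j (fun w => ω (pt w 0))
      fun w => by simp only [pt, cellShift_apply_of_ne hj.symm]
  have hdir : ∀ w, ω (pt w 0) * (ℓ + D w) ^ 2 ≤ ∑ i : Fin d,
      ω (pt w 0) * |(if i = j then ℓ else 0) + φ (pt w + stdb i) - φ (pt w)| ^ 2 := fun w => by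
    refine le_of_eq_of_le ?_ (Finset.single_le_sum (fun i _ => ?_) (Finset.mem_univ j))
    · simp only [if_pos, sq_abs, D, add_sub_assoc]
    · exact mul_nonneg (hω _) (sq_nonneg _)
  rw [cellEnergy_zero_eq]
  refine mul_le_mul_of_nonneg_left ?_ (by positivity)
  calc ∑ w, ω (pt w 0) * ℓ ^ 2
      = ∑ w, (ω (pt w 0) * ℓ ^ 2 + 2 * ℓ * (ω (pt w 0) * D w)) := by
        rw [Finset.sum_add_distrib, ← Finset.mul_sum, hcross, mul_zero, add_zero]
    _ ≤ ∑ w, ω (pt w 0) * (ℓ + D w) ^ 2 :=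
        Finset.sum_le_sum fun w _ => by nlinarith [mul_nonneg (hω (pt w 0)) (sq_nonneg (D w))]
    _ ≤ _ := Finset.sum_le_sum fun w _ => hdir w

theorem layered_cell_transverse_general
    (d : ℕ) [NeZero d] (ω : ℤ → ℝ) (hω : ∀ x, 0 < ω x)
    (k : ℕ) (ℓ : ℝ) (j : Fin d) (hj : j ≠ 0) :
    (⨅ φ : {φ : (Fin d → ℤ) → ℝ // kPeriodic k φ},
        ((k : ℝ) ^ d)⁻¹ * ∑ w : Fin d → Fin k, ∑ i : Fin d,
          ω (pt w 0) *
            |(if i = j then ℓ else 0) + φ.1 (pt w + stdb i) - φ.1 (pt w)| ^ 2) =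
      ℓ ^ 2 * ((k : ℝ)⁻¹ * ∑ x ∈ Finset.range k, ω (x : ℤ)) ∧
    ((k : ℝ) ^ d)⁻¹ * ∑ w : Fin d → Fin k, ∑ i : Fin d,
        ω (pt w 0) * |(if i = j then ℓ else 0) + (0 : ℝ) - 0| ^ 2 =
      ℓ ^ 2 * ((k : ℝ)⁻¹ * ∑ x ∈ Finset.range k, ω (x : ℤ)) := by
  change (⨅ φ : {φ : (Fin d → ℤ) → ℝ // kPeriodic k φ}, cellEnergy k ω ℓ j φ.1) = _ ∧
    cellEnergy k ω ℓ j 0 = _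
  have hmin : IsLeast (Set.range fun φ : {φ // kPeriodic k φ} => cellEnergy k ω ℓ j φ.1)
      (cellEnergy k ω ℓ j 0) :=
    ⟨⟨⟨0, fun _ _ => rfl⟩, rfl⟩, by
      rintro _ ⟨φ, rfl⟩
      exact cellEnergy_zero_le (fun x => (hω x).le) ℓ hj φ.2⟩
  rw [← cellEnergy_zero ω ℓ j]
  exact ⟨hmin.csInf_eq, rfl⟩

/-- explicit homogenization of a layered quadratic medium, transverse
directions, Remark 3.5 of the paper: for `j ≠ e₁` the `k`-periodic cell problem with slope `ℓ`
in direction `e_j` has value `ℓ²` times the arithmetic mean of the weights `ω(0),…,ω(k−1)`,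
and the infimum is attained at `φ = 0`. -/
theorem layered_cell_transverse
    (d : ℕ) (hd : 2 ≤ d) [NeZero d] (ω : ℤ → ℝ) (hω : ∀ x, 0 < ω x)
    (k : ℕ) (hk : 1 ≤ k) (ℓ : ℝ) (j : Fin d) (hj : j ≠ 0) :
    (⨅ φ : {φ : (Fin d → ℤ) → ℝ // kPeriodic k φ},
        ((k : ℝ) ^ d)⁻¹ * ∑ w : Fin d → Fin k, ∑ i : Fin d,
          ω (pt w 0) *
            |(if i = j then ℓ else 0) + φ.1 (pt w + stdb i) - φ.1 (pt w)| ^ 2) =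
      ℓ ^ 2 * ((k : ℝ)⁻¹ * ∑ x ∈ Finset.range k, ω (x : ℤ)) ∧
    ((k : ℝ) ^ d)⁻¹ * ∑ w : Fin d → Fin k, ∑ i : Fin d,
        ω (pt w 0) * |(if i = j then ℓ else 0) + (0 : ℝ) - 0| ^ 2 =
      ℓ ^ 2 * ((k : ℝ)⁻¹ * ∑ x ∈ Finset.range k, ω (x : ℤ)) :=
  layered_cell_transverse_general d ω hω k ℓ j hj

end Layered
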